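/- Let (X,d) be a locally compact, incomplete, rectifiably connected metric space, let a ≥ 1, and let γ be an a-cone arc in X joining x to x0. Then γ, regarded as a curve in the metric space (X,k) where k is the quasihyperbolic metric, is a (λ,μ)-quasigeodesic with λ = 3a and μ = 3a·log(3a). -/

import Mathlib

open Set Metric MeasureTheory

noncomputable section

/-- The metric boundary of `X`: the complement of (the image of) `X` in its
metric completion `X̄`, i.e. `∂X = X̄ \ X`. -/
def mBoundary (X : Type*) [MetricSpace X] : Set (UniformSpace.Completion X) :=
  (Set.range ((↑) : X → UniformSpace.Completion X))ᶜ

/-- `dB x` is the distance `d(x)` from `x` to the metric boundary `∂X`. -/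
def dB {X : Type*} [MetricSpace X] (x : X) : ℝ :=
  Metric.infDist (x : UniformSpace.Completion X) (mBoundary X)

/-- `X` is rectifiably connected: any two points are joined by a curve of
finite length. -/
def RectifiablyConnected (X : Type*) [MetricSpace X] : Prop :=
  ∀ x y : X, ∃ (L : ℝ) (γ : ℝ → X), 0 ≤ L ∧ ContinuousOn γ (Set.Icc 0 L) ∧
    γ 0 = x ∧ γ L = y ∧ eVariationOn γ (Set.Icc 0 L) ≠ ⊤

/-- `γ` is parametrized by arclength (w.r.t. `d`) on `[0, L]`: the length of
every subarc equals the length of its parameter interval. -/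
def UnitSpeedOn {X : Type*} [MetricSpace X] (γ : ℝ → X) (L : ℝ) : Prop :=
  ∀ s ∈ Set.Icc (0:ℝ) L, ∀ t ∈ Set.Icc (0:ℝ) L, s ≤ t →
    eVariationOn γ (Set.Icc s t) = ENNReal.ofReal (t - s)

/-- The quasihyperbolic distance `k(x,y) = inf ∫_γ |dz| / d(z)`, the infimum
being over rectifiable curves joining `x` to `y`, which may be taken
parametrized by arclength (so the line integral is `∫ 1/d(γ(t)) dt`). -/
def qhDist {X : Type*} [MetricSpace X] (x y : X) : ℝ :=
  sInf { r : ℝ | ∃ (L : ℝ) (γ : ℝ → X), 0 ≤ L ∧ UnitSpeedOn γ L ∧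
    γ 0 = x ∧ γ L = y ∧ r = ∫ t in (0:ℝ)..L, 1 / dB (γ t) }

/-- The quasihyperbolic length `ℓ_k` of the subarc `γ[γ(s), γ(t)]` of an
arclength-parametrized curve `γ`. -/
def qhLen {X : Type*} [MetricSpace X] (γ : ℝ → X) (s t : ℝ) : ℝ :=
  ∫ u in s..t, 1 / dB (γ u)

/-- `γ : [0,T] → X` is a quasihyperbolic geodesic, i.e. a geodesic of `(X,k)`. -/
def IsQHGeodesic {X : Type*} [MetricSpace X] (γ : ℝ → X) (T : ℝ) : Prop :=
  0 ≤ T ∧ ∀ s ∈ Set.Icc (0:ℝ) T, ∀ t ∈ Set.Icc (0:ℝ) T, qhDist (γ s) (γ t) = |s - t|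

/-- The `a`-cone arc condition for a curve `γ : [0,L] → X`:
`ℓ(γ[γ(0), γ(t)]) ≤ a · d(γ(t))` for all `t`. -/
def IsConeArcOn {X : Type*} [MetricSpace X] (a : ℝ) (γ : ℝ → X) (L : ℝ) : Prop :=
  ∀ t ∈ Set.Icc (0:ℝ) L, eVariationOn γ (Set.Icc 0 t) ≤ ENNReal.ofReal (a * dB (γ t))

/-- `X` is `a`-John with center `x0`: every point is joined to `x0` by an
`a`-cone arc. -/
def IsJohn (X : Type*) [MetricSpace X] (a : ℝ) (x0 : X) : Prop :=
  ∀ x : X, ∃ (L : ℝ) (γ : ℝ → X), 0 ≤ L ∧ ContinuousOn γ (Set.Icc 0 L) ∧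
    Set.InjOn γ (Set.Icc 0 L) ∧ γ 0 = x ∧ γ L = x0 ∧ IsConeArcOn a γ L

/-- `X` is quasihyperbolic `a`-John with center `x0`: every quasihyperbolic
geodesic joining a point of `X` to `x0` is an `a`-cone arc. -/
def IsQHJohn {X : Type*} [MetricSpace X] (a : ℝ) (x0 : X) : Prop :=
  ∀ (γ : ℝ → X) (T : ℝ), IsQHGeodesic γ T → γ T = x0 → IsConeArcOn a γ T

/-- The criterion of Theorem 1: for every quasihyperbolic geodesic `α` ending
at `x0` and points `y₁ = α(s)`, `y₂ = α(t)` on `α` such that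
`d(u) ≤ 2 min (d y₁) (d y₂)` on the subarc `α[y₁,y₂]`, one has `k(y₁,y₂) ≤ A`. -/
def QHJohnCriterion {X : Type*} [MetricSpace X] (x0 : X) (A : ℝ) : Prop :=
  ∀ (α : ℝ → X) (T : ℝ), IsQHGeodesic α T → α T = x0 →
    ∀ s ∈ Set.Icc (0:ℝ) T, ∀ t ∈ Set.Icc (0:ℝ) T, s ≤ t →
      (∀ u ∈ Set.Icc s t, dB (α u) ≤ 2 * min (dB (α s)) (dB (α t))) →
      qhDist (α s) (α t) ≤ A

/-- `X` is `c`-uniform: any `x, y` are joined by a curve that is `c`-quasiconvex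
and satisfies the double cone condition. -/
def IsUniform (X : Type*) [MetricSpace X] (c : ℝ) : Prop :=
  ∀ x y : X, ∃ (L : ℝ) (γ : ℝ → X), 0 ≤ L ∧ ContinuousOn γ (Set.Icc 0 L) ∧
    γ 0 = x ∧ γ L = y ∧
    eVariationOn γ (Set.Icc 0 L) ≤ ENNReal.ofReal (c * dist x y) ∧
    ∀ t ∈ Set.Icc (0:ℝ) L,
      min (eVariationOn γ (Set.Icc 0 t)) (eVariationOn γ (Set.Icc t L)) ≤
        ENNReal.ofReal (c * dB (γ t))

/-- `(X, k)` is Gromov `δ`-hyperbolic: every side of every quasihyperbolic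
geodesic triangle lies in the `δ`-neighbourhood (w.r.t. `k`) of the union of
the other two sides. -/
def QHGromovHyperbolic (X : Type*) [MetricSpace X] (δ : ℝ) : Prop :=
  ∀ (γ₁ γ₂ γ₃ : ℝ → X) (T₁ T₂ T₃ : ℝ),
    IsQHGeodesic γ₁ T₁ → IsQHGeodesic γ₂ T₂ → IsQHGeodesic γ₃ T₃ →
    γ₂ 0 = γ₁ T₁ → γ₃ 0 = γ₁ 0 → γ₃ T₃ = γ₂ T₂ →
    ∀ s ∈ Set.Icc (0:ℝ) T₁, ∃ t : ℝ,
      (t ∈ Set.Icc (0:ℝ) T₂ ∧ qhDist (γ₁ s) (γ₂ t) ≤ δ) ∨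
      (t ∈ Set.Icc (0:ℝ) T₃ ∧ qhDist (γ₁ s) (γ₃ t) ≤ δ)

section AuxLemmas

variable {X : Type*} [MetricSpace X]

lemma dB_nonneg (z : X) : 0 ≤ dB z := Metric.infDist_nonneg

lemma dB_le_add_dist (z w : X) : dB w ≤ dB z + dist z w := by
  have h := Metric.infDist_le_infDist_add_dist
    (x := (w : UniformSpace.Completion X)) (y := (z : UniformSpace.Completion X))
    (s := mBoundary X)
  rwa [UniformSpace.Completion.dist_eq, dist_comm] at h

lemma dB_continuous : Continuous (dB (X := X)) :=
  (Metric.continuous_infDist_pt _).comp (UniformSpace.Completion.continuous_coe X)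

lemma dB_pos [LocallyCompactSpace X] (hb : (mBoundary X).Nonempty) (z : X) : 0 < dB z := by
  obtain ⟨K, hKc, hK⟩ := exists_compact_mem_nhds z
  obtain ⟨r, hr, hball⟩ := Metric.nhds_basis_closedBall.mem_iff.mp hK
  have hcomp : IsCompact (Metric.closedBall z r) := hKc.of_isClosed_subset Metric.isClosed_closedBall hball
  set C : Set (UniformSpace.Completion X) := ((↑) : X → _) '' Metric.closedBall z r with hC
  have hCcl : IsClosed C := (hcomp.image (UniformSpace.Completion.continuous_coe X)).isClosed
  rcases lt_or_ge 0 (dB z) with h | h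
  · exact h
  have h0 : dB z < r / 2 := lt_of_le_of_lt h (by linarith)
  obtain ⟨p, hp, hpd⟩ := (Metric.infDist_lt_iff hb).mp h0
  have hpC : p ∈ C := by
    rw [← hCcl.closure_eq]
    rw [Metric.mem_closure_iff]
    intro ε hε
    have hd : p ∈ closure (Set.range ((↑) : X → UniformSpace.Completion X)) := by
      rw [UniformSpace.Completion.denseRange_coe.closure_range]; trivial
    obtain ⟨q, hq, hqd⟩ := Metric.mem_closure_iff.mp hd (min ε (r/2)) (lt_min hε (by linarith))
    obtain ⟨x, rfl⟩ := hq
    refine ⟨x, ⟨x, ?_, rfl⟩, lt_of_lt_of_le hqd (min_le_left _ _)⟩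
    have : dist (z : UniformSpace.Completion X) x ≤ dist (z : UniformSpace.Completion X) p + dist p x :=
      dist_triangle _ _ _
    rw [Metric.mem_closedBall, ← UniformSpace.Completion.dist_eq, dist_comm]
    have h2 := lt_of_lt_of_le hqd (min_le_right ε (r/2))
    linarith
  obtain ⟨x, _, rfl⟩ := hpC
  exact absurd ⟨x, rfl⟩ hp

lemma unitSpeed_dist_le {β : ℝ → X} {M : ℝ} (h : UnitSpeedOn β M) {u v : ℝ}
    (hu : u ∈ Set.Icc 0 M) (hv : v ∈ Set.Icc 0 M) (huv : u ≤ v) :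
    dist (β u) (β v) ≤ v - u := by
  have h1 := eVariationOn.edist_le β (s := Set.Icc u v) (x := u) (y := v)
    ⟨le_refl u, huv⟩ ⟨huv, le_refl v⟩
  rw [h u hu v hv huv, edist_dist] at h1
  exact (ENNReal.ofReal_le_ofReal_iff (by linarith)).mp h1

lemma unitSpeed_continuousOn {β : ℝ → X} {M : ℝ} (h : UnitSpeedOn β M) :
    ContinuousOn β (Set.Icc 0 M) := by
  refine (LipschitzOnWith.continuousOn (K := 1) ?_)
  refine LipschitzOnWith.of_dist_le_mul fun x hx y hy => ?_
  rcases le_total x y with hxy | hxy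
  · have h1 := unitSpeed_dist_le h hx hy hxy
    rw [NNReal.coe_one, one_mul, Real.dist_eq, abs_sub_comm, abs_of_nonneg (by linarith : (0:ℝ) ≤ y - x)]
    linarith
  · have h1 := unitSpeed_dist_le h hy hx hxy
    rw [dist_comm (β x), NNReal.coe_one, one_mul, Real.dist_eq, abs_of_nonneg (by linarith : (0:ℝ) ≤ x - y)]
    linarith

lemma oneDiv_dB_contOn [LocallyCompactSpace X] (hb : (mBoundary X).Nonempty)
    {β : ℝ → X} {s : Set ℝ} (hβ : ContinuousOn β s) :
    ContinuousOn (fun u => 1 / dB (β u)) s :=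
  continuousOn_const.div (dB_continuous.comp_continuousOn hβ)
    (fun u _ => (dB_pos hb (β u)).ne')

lemma member_nonneg {β : ℝ → X} {M : ℝ} (hM : 0 ≤ M) :
    0 ≤ ∫ u in (0:ℝ)..M, 1 / dB (β u) :=
  intervalIntegral.integral_nonneg hM fun u _ => one_div_nonneg.2 (dB_nonneg _)

lemma member_bounds [LocallyCompactSpace X] (hb : (mBoundary X).Nonempty)
    {β : ℝ → X} {M : ℝ} (hM : 0 ≤ M) (hus : UnitSpeedOn β M) :
    Real.log (dB (β M)) - Real.log (dB (β 0)) ≤ (∫ u in (0:ℝ)..M, 1 / dB (β u)) ∧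
    Real.log (dB (β 0)) - Real.log (dB (β M)) ≤ (∫ u in (0:ℝ)..M, 1 / dB (β u)) := by
  set d1 := dB (β 0) with hd1def
  set d2 := dB (β M) with hd2def
  have hd1 : 0 < d1 := dB_pos hb _
  have hd2 : 0 < d2 := dB_pos hb _
  have h0M : (0:ℝ) ∈ Set.Icc 0 M := ⟨le_refl 0, hM⟩
  have hMM : M ∈ Set.Icc 0 M := ⟨hM, le_refl M⟩
  have hcont : ContinuousOn (fun u => 1 / dB (β u)) (Set.Icc 0 M) :=
    oneDiv_dB_contOn hb (unitSpeed_continuousOn hus)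
  have hint : IntervalIntegrable (fun u => 1 / dB (β u)) volume 0 M := by
    apply ContinuousOn.intervalIntegrable
    rwa [Set.uIcc_of_le hM]
  have hub1 : ∀ u ∈ Set.Icc (0:ℝ) M, dB (β u) ≤ d1 + u := fun u hu => by
    have h1 := dB_le_add_dist (β 0) (β u)
    have h2 := unitSpeed_dist_le hus h0M hu hu.1
    linarith
  have hub2 : ∀ u ∈ Set.Icc (0:ℝ) M, dB (β u) ≤ d2 + (M - u) := fun u hu => by
    have h1 := dB_le_add_dist (β M) (β u)
    have h2 := unitSpeed_dist_le hus hu hMM hu.2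
    rw [dist_comm] at h2
    linarith
  constructor
  · have hint2 : IntervalIntegrable (fun u => 1 / (d1 + u)) volume 0 M := by
      apply ContinuousOn.intervalIntegrable
      apply continuousOn_const.div (continuous_const.add continuous_id).continuousOn
      intro u hu
      rw [Set.uIcc_of_le hM] at hu
      have := hu.1; exact (by linarith : (0:ℝ) < d1 + u).ne'
    have hmono : (∫ u in (0:ℝ)..M, 1 / (d1 + u)) ≤ ∫ u in (0:ℝ)..M, 1 / dB (β u) := by
      apply intervalIntegral.integral_mono_on hM hint2 hint
      intro u hu
      exact one_div_le_one_div_of_le (dB_pos hb _) (hub1 u hu)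
    have hcalc : (∫ u in (0:ℝ)..M, 1 / (d1 + u)) = Real.log (M + d1) - Real.log d1 := by
      have heq : (fun u : ℝ => 1 / (d1 + u)) = fun u : ℝ => (fun v : ℝ => 1 / v) (u + d1) := by
        funext u; simp [add_comm]
      rw [heq, intervalIntegral.integral_comp_add_right (fun v : ℝ => 1 / v) d1, zero_add,
        integral_one_div, Real.log_div (by positivity) (by positivity)]
      rw [Set.mem_uIcc]
      push_neg
      constructor <;> intro h1 <;> linarith
    have hd2le : d2 ≤ M + d1 := by
      have := hub2 M hMM; have := hub1 M hMM; linarith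
    have := Real.log_le_log hd2 hd2le
    linarith
  · have hint2 : IntervalIntegrable (fun u => 1 / (d2 + (M - u))) volume 0 M := by
      apply ContinuousOn.intervalIntegrable
      apply continuousOn_const.div (continuous_const.add (continuous_const.sub continuous_id)).continuousOn
      intro u hu
      rw [Set.uIcc_of_le hM] at hu
      have h3 := hu.2
      exact (by linarith : (0:ℝ) < d2 + (M - u)).ne'
    have hmono : (∫ u in (0:ℝ)..M, 1 / (d2 + (M - u))) ≤ ∫ u in (0:ℝ)..M, 1 / dB (β u) := by
      apply intervalIntegral.integral_mono_on hM hint2 hint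
      intro u hu
      exact one_div_le_one_div_of_le (dB_pos hb _) (hub2 u hu)
    have hcalc : (∫ u in (0:ℝ)..M, 1 / (d2 + (M - u))) = Real.log (M + d2) - Real.log d2 := by
      have heq : (fun u : ℝ => 1 / (d2 + (M - u))) = fun u : ℝ => (fun v : ℝ => 1 / v) ((M + d2) - u) := by
        funext u; ring_nf
      rw [heq, intervalIntegral.integral_comp_sub_left (fun v : ℝ => 1 / v) (M + d2)]
      have e1 : M + d2 - M = d2 := by ring
      have e2 : M + d2 - 0 = M + d2 := by ring
      rw [e1, e2, integral_one_div, Real.log_div (by positivity) (by positivity)]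
      rw [Set.mem_uIcc]
      push_neg
      constructor <;> intro h1 <;> linarith
    have hd1le : d1 ≤ M + d2 := by
      have := hub2 0 h0M; linarith
    have := Real.log_le_log hd1 hd1le
    linarith

lemma subarc_forward {γ : ℝ → X} {L s t : ℝ} (hunit : UnitSpeedOn γ L)
    (hs : s ∈ Set.Icc 0 L) (ht : t ∈ Set.Icc 0 L) (hst : s ≤ t) :
    ∃ (M : ℝ) (β : ℝ → X), 0 ≤ M ∧ UnitSpeedOn β M ∧ β 0 = γ s ∧ β M = γ t ∧
      (∫ u in s..t, 1 / dB (γ u)) = ∫ u in (0:ℝ)..M, 1 / dB (β u) := by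
  refine ⟨t - s, fun u => γ (u + s), by linarith, ?_, by simp, by simp, ?_⟩
  · intro s₁ hs₁ t₁ ht₁ h12
    have hmono : MonotoneOn (fun u : ℝ => u + s) (Set.Icc s₁ t₁) :=
      fun a _ b _ hab => by simpa using hab
    have hcomp := eVariationOn.comp_eq_of_monotoneOn γ (fun u : ℝ => u + s) hmono
    have himg : (fun u : ℝ => u + s) '' Set.Icc s₁ t₁ = Set.Icc (s₁ + s) (t₁ + s) :=
      Set.image_add_const_Icc s s₁ t₁
    rw [show (fun u => γ (u + s)) = γ ∘ (fun u : ℝ => u + s) from rfl, hcomp, himg,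
      hunit (s₁ + s) ⟨by linarith [hs₁.1, hs.1], by linarith [ht₁.2, ht.2]⟩
        (t₁ + s) ⟨by linarith [hs₁.1, hs.1, h12], by linarith [ht₁.2, ht.2]⟩ (by linarith)]
    congr 1; ring
  · have h := intervalIntegral.integral_comp_add_right (a := (0:ℝ)) (b := t - s)
      (fun v => 1 / dB (γ v)) s
    rw [zero_add, sub_add_cancel] at h
    exact h.symm

lemma subarc_backward {γ : ℝ → X} {L s t : ℝ} (hunit : UnitSpeedOn γ L)
    (hs : s ∈ Set.Icc 0 L) (ht : t ∈ Set.Icc 0 L) (hst : s ≤ t) :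
    ∃ (M : ℝ) (β : ℝ → X), 0 ≤ M ∧ UnitSpeedOn β M ∧ β 0 = γ t ∧ β M = γ s ∧
      (∫ u in s..t, 1 / dB (γ u)) = ∫ u in (0:ℝ)..M, 1 / dB (β u) := by
  refine ⟨t - s, fun u => γ (t - u), by linarith, ?_, by simp, by simp, ?_⟩
  · intro s₁ hs₁ t₁ ht₁ h12
    have hanti : AntitoneOn (fun u : ℝ => t - u) (Set.Icc s₁ t₁) :=
      fun a _ b _ hab => sub_le_sub_left hab t
    have hcomp := eVariationOn.comp_eq_of_antitoneOn γ (fun u : ℝ => t - u) hanti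
    have himg : (fun u : ℝ => t - u) '' Set.Icc s₁ t₁ = Set.Icc (t - t₁) (t - s₁) :=
      Set.image_const_sub_Icc t s₁ t₁
    rw [show (fun u => γ (t - u)) = γ ∘ (fun u : ℝ => t - u) from rfl, hcomp, himg,
      hunit (t - t₁) ⟨by linarith [ht₁.2, hs.1], by linarith [hs₁.1, ht.2]⟩
        (t - s₁) ⟨by linarith [ht₁.2, hs.1, h12], by linarith [hs₁.1, ht.2]⟩ (by linarith)]
    congr 1; ring
  · have h := intervalIntegral.integral_comp_sub_left (a := (0:ℝ)) (b := t - s)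
      (fun v => 1 / dB (γ v)) t
    rw [sub_zero, sub_sub_cancel] at h
    exact h.symm

lemma qhDist_bounds [LocallyCompactSpace X] (hb : (mBoundary X).Nonempty) {x y : X} {r : ℝ}
    (hmem : ∃ (M : ℝ) (β : ℝ → X), 0 ≤ M ∧ UnitSpeedOn β M ∧ β 0 = x ∧ β M = y ∧
      r = ∫ u in (0:ℝ)..M, 1 / dB (β u)) :
    0 ≤ qhDist x y ∧ Real.log (dB y) - Real.log (dB x) ≤ qhDist x y ∧
      Real.log (dB x) - Real.log (dB y) ≤ qhDist x y ∧ qhDist x y ≤ r := by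
  set S := { r : ℝ | ∃ (M : ℝ) (β : ℝ → X), 0 ≤ M ∧ UnitSpeedOn β M ∧
    β 0 = x ∧ β M = y ∧ r = ∫ u in (0:ℝ)..M, 1 / dB (β u) } with hS
  have hq : qhDist x y = sInf S := rfl
  have hne : S.Nonempty := ⟨r, hmem⟩
  have hbdd : BddBelow S := by
    refine ⟨0, ?_⟩
    rintro r' ⟨M, β, hM, -, -, -, rfl⟩
    exact member_nonneg hM
  refine ⟨?_, ?_, ?_, ?_⟩
  · rw [hq]
    apply le_csInf hne
    rintro r' ⟨M, β, hM, -, -, -, rfl⟩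
    exact member_nonneg hM
  · rw [hq]
    apply le_csInf hne
    rintro r' ⟨M, β, hM, hu, h0, h1, rfl⟩
    have h := (member_bounds hb hM hu).1
    rwa [h0, h1] at h
  · rw [hq]
    apply le_csInf hne
    rintro r' ⟨M, β, hM, hu, h0, h1, rfl⟩
    have h := (member_bounds hb hM hu).2
    rwa [h0, h1] at h
  · rw [hq]
    exact csInf_le hbdd hmem


end AuxLemmas

/-- An `a`-cone arc `γ` in `X` joining `x` to `x0`, regarded
as a curve in `(X,k)` (i.e. reparametrized by its quasihyperbolic arclength
`t ↦ qhLen γ 0 t`), is a `(λ,μ)`-quasigeodesic with `λ = 3a`, `μ = 3a·log(3a)`: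
`(3a)⁻¹·|σ(t) - σ(t')| - 3a·log(3a) ≤ k(γ(t), γ(t')) ≤ 3a·|σ(t) - σ(t')| + 3a·log(3a)`
where `σ(t) = ℓ_k(γ[0,t])`. -/
theorem coneArc_is_quasigeodesic {X : Type*} [MetricSpace X] [LocallyCompactSpace X]
    (hb : (mBoundary X).Nonempty) (hrc : RectifiablyConnected X)
    (a : ℝ) (ha : 1 ≤ a) (x x0 : X) (γ : ℝ → X) (L : ℝ) (hL : 0 ≤ L)
    (hcont : ContinuousOn γ (Set.Icc 0 L)) (hinj : Set.InjOn γ (Set.Icc 0 L))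
    (hunit : UnitSpeedOn γ L) (h0 : γ 0 = x) (h1 : γ L = x0)
    (hcone : IsConeArcOn a γ L) :
    ∀ s ∈ Set.Icc (0:ℝ) L, ∀ t ∈ Set.Icc (0:ℝ) L,
      (3 * a)⁻¹ * |qhLen γ 0 t - qhLen γ 0 s| - 3 * a * Real.log (3 * a) ≤
          qhDist (γ s) (γ t) ∧
        qhDist (γ s) (γ t) ≤
          3 * a * |qhLen γ 0 t - qhLen γ 0 s| + 3 * a * Real.log (3 * a) := by
  have ha0 : (0:ℝ) < a := lt_of_lt_of_le one_pos ha
  have h3a : (0:ℝ) < 3 * a := by linarith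
  have hlog3a : (1:ℝ) ≤ Real.log (3 * a) := by
    have hexp : Real.exp 1 < 3 := lt_of_lt_of_le Real.exp_one_lt_d9 (by norm_num)
    have h1 : Real.log (Real.exp 1) ≤ Real.log (3 * a) :=
      Real.log_le_log (Real.exp_pos 1) (by nlinarith [Real.exp_pos 1])
    rwa [Real.log_exp] at h1
  have hlog3a0 : (0:ℝ) ≤ Real.log (3 * a) := by linarith
  have hfc : ContinuousOn (fun u => 1 / dB (γ u)) (Set.Icc 0 L) := oneDiv_dB_contOn hb hcont
  have hIcc : ∀ u v : ℝ, u ∈ Set.Icc (0:ℝ) L → v ∈ Set.Icc (0:ℝ) L →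
      IntervalIntegrable (fun u => 1 / dB (γ u)) volume u v := by
    intro u v hu hv
    apply ContinuousOn.intervalIntegrable
    apply hfc.mono
    rw [← Set.uIcc_of_le hL]
    exact Set.uIcc_subset_uIcc (by rwa [Set.uIcc_of_le hL]) (by rwa [Set.uIcc_of_le hL])
  have key : ∀ s ∈ Set.Icc (0:ℝ) L, ∀ t ∈ Set.Icc (0:ℝ) L, s ≤ t →
      qhLen γ 0 t - qhLen γ 0 s = (∫ u in s..t, 1 / dB (γ u)) ∧
      ∀ z w : X, ((z = γ s ∧ w = γ t) ∨ (z = γ t ∧ w = γ s)) →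
        (3 * a)⁻¹ * (∫ u in s..t, 1 / dB (γ u)) - 3 * a * Real.log (3 * a) ≤ qhDist z w ∧
        qhDist z w ≤ 3 * a * (∫ u in s..t, 1 / dB (γ u)) + 3 * a * Real.log (3 * a) := by
    intro s hs t ht hst
    set I := ∫ u in s..t, 1 / dB (γ u) with hIdef
    have hI0 : 0 ≤ I :=
      intervalIntegral.integral_nonneg hst fun u _ => one_div_nonneg.2 (dB_nonneg _)
    constructor
    · show qhLen γ 0 t - qhLen γ 0 s = I
      have hadd := intervalIntegral.integral_add_adjacent_intervals
        (hIcc 0 s ⟨le_refl 0, hL⟩ hs) (hIcc s t hs ht)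
      have e1 : qhLen γ 0 t = ∫ u in (0:ℝ)..t, 1 / dB (γ u) := rfl
      have e2 : qhLen γ 0 s = ∫ u in (0:ℝ)..s, 1 / dB (γ u) := rfl
      rw [e1, e2, ← hadd]
      ring
    · intro z w hzw
      set d1 := dB (γ s) with hd1def
      set d2 := dB (γ t) with hd2def
      have hd1 : 0 < d1 := dB_pos hb _
      have hd2 : 0 < d2 := dB_pos hb _
      have hKfacts : 0 ≤ qhDist z w ∧ Real.log d2 - Real.log d1 ≤ qhDist z w ∧
          qhDist z w ≤ I := by
        rcases hzw with ⟨rfl, rfl⟩ | ⟨rfl, rfl⟩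
        · obtain ⟨M, β, hM, hu, h0, h1, hI⟩ := subarc_forward hunit hs ht hst
          obtain ⟨k0, k1, _, k3⟩ := qhDist_bounds hb ⟨M, β, hM, hu, h0, h1, hI⟩
          exact ⟨k0, k1, k3⟩
        · obtain ⟨M, β, hM, hu, h0, h1, hI⟩ := subarc_backward hunit hs ht hst
          obtain ⟨k0, _, k2, k3⟩ := qhDist_bounds hb ⟨M, β, hM, hu, h0, h1, hI⟩
          exact ⟨k0, k2, k3⟩
      obtain ⟨hK0, hKlog, hKI⟩ := hKfacts
      have hKmax : max 0 (Real.log d2 - Real.log d1) ≤ qhDist z w := max_le hK0 hKlog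
      have hmax0 : (0:ℝ) ≤ max 0 (Real.log d2 - Real.log d1) := le_max_left _ _
      have hlog2a : (0:ℝ) ≤ Real.log (2 * a) := Real.log_nonneg (by linarith)
      have hconeu : ∀ u ∈ Set.Icc (0:ℝ) L, u ≤ a * dB (γ u) := by
        intro u hu
        have h1 := hcone u hu
        rw [hunit 0 ⟨le_refl 0, hL⟩ u hu hu.1, sub_zero] at h1
        exact (ENNReal.ofReal_le_ofReal_iff (mul_nonneg ha0.le (dB_nonneg _))).mp h1
      have hdlow : ∀ u ∈ Set.Icc s t, d1 - (u - s) ≤ dB (γ u) := by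
        intro u hu
        have h1 := dB_le_add_dist (γ u) (γ s)
        have h2 := unitSpeed_dist_le hunit hs
          ⟨le_trans hs.1 hu.1, le_trans hu.2 ht.2⟩ hu.1
        rw [dist_comm] at h2
        linarith
      have hIbound : I ≤ 1 + a * Real.log (2 * a) +
          a * max 0 (Real.log d2 - Real.log d1) := by
        by_cases hcase : t ≤ s + d1 / 2
        · have hmono : I ≤ ∫ _u in s..t, 2 / d1 := by
            apply intervalIntegral.integral_mono_on hst (hIcc s t hs ht)
              intervalIntegrable_const
            intro u hu
            have hh := hdlow u hu
            have h2 : d1 / 2 ≤ dB (γ u) := by linarith [hu.2]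
            calc 1 / dB (γ u) ≤ 1 / (d1 / 2) :=
                  one_div_le_one_div_of_le (by linarith) h2
              _ = 2 / d1 := one_div_div d1 2
          have hval : (∫ _u in s..t, (2 / d1 : ℝ)) = (t - s) * (2 / d1) := by
            rw [intervalIntegral.integral_const, smul_eq_mul]
          have h3 : t - s ≤ d1 / 2 := by linarith
          have h4 : (t - s) * (2 / d1) ≤ (d1 / 2) * (2 / d1) :=
            mul_le_mul_of_nonneg_right h3 (by positivity)
          have h5 : (d1 / 2) * (2 / d1) = 1 := by field_simp
          have h6 : 0 ≤ a * max 0 (Real.log d2 - Real.log d1) := mul_nonneg ha0.le hmax0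
          have h7 : 0 ≤ a * Real.log (2 * a) := mul_nonneg ha0.le hlog2a
          linarith
        · push_neg at hcase
          set m := s + d1 / 2 with hm
          have hm0 : 0 < m := by
            have := hs.1; rw [hm]; linarith
          have hmt : m ≤ t := hcase.le
          have hmL : m ∈ Set.Icc (0:ℝ) L := ⟨by linarith, by linarith [ht.2]⟩
          have hsplit : I = (∫ u in s..m, 1 / dB (γ u)) + ∫ u in m..t, 1 / dB (γ u) :=
            (intervalIntegral.integral_add_adjacent_intervals
              (hIcc s m hs hmL) (hIcc m t hmL ht)).symm
          have hsm : s ≤ m := by rw [hm]; linarith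
          have hpart1 : (∫ u in s..m, 1 / dB (γ u)) ≤ 1 := by
            have hmono : (∫ u in s..m, 1 / dB (γ u)) ≤ ∫ _u in s..m, 2 / d1 := by
              apply intervalIntegral.integral_mono_on hsm (hIcc s m hs hmL)
                intervalIntegrable_const
              intro u hu
              have hh := hdlow u ⟨hu.1, le_trans hu.2 hmt⟩
              have h2 : d1 / 2 ≤ dB (γ u) := by
                have := hu.2; rw [hm] at this; linarith
              calc 1 / dB (γ u) ≤ 1 / (d1 / 2) :=
                    one_div_le_one_div_of_le (by linarith) h2
                _ = 2 / d1 := one_div_div d1 2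
            have hval : (∫ _u in s..m, (2 / d1 : ℝ)) = (m - s) * (2 / d1) := by
              rw [intervalIntegral.integral_const, smul_eq_mul]
            have hms : m - s = d1 / 2 := by rw [hm]; ring
            have h5 : (d1 / 2) * (2 / d1) = 1 := by field_simp
            rw [hval, hms] at hmono
            linarith
          have hpart2 : (∫ u in m..t, 1 / dB (γ u)) ≤
              a * Real.log (2 * a) + a * max 0 (Real.log d2 - Real.log d1) := by
            have hint2 : IntervalIntegrable (fun u => a * (1 / u)) volume m t := by
              apply ContinuousOn.intervalIntegrable
              apply continuousOn_const.mul
              apply continuousOn_const.div continuousOn_id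
              intro u hu
              rw [Set.uIcc_of_le hmt] at hu
              exact (lt_of_lt_of_le hm0 hu.1).ne'
            have hmono : (∫ u in m..t, 1 / dB (γ u)) ≤ ∫ u in m..t, a * (1 / u) := by
              apply intervalIntegral.integral_mono_on hmt (hIcc m t hmL ht) hint2
              intro u hu
              have hu0 : 0 < u := lt_of_lt_of_le hm0 hu.1
              have hc := hconeu u ⟨le_trans hm0.le hu.1, le_trans hu.2 ht.2⟩
              have hge : u / a ≤ dB (γ u) := (div_le_iff₀ ha0).mpr (by linarith [hc])
              calc 1 / dB (γ u) ≤ 1 / (u / a) :=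
                    one_div_le_one_div_of_le (by positivity) hge
                _ = a / u := one_div_div u a
                _ = a * (1 / u) := by ring
            have hcalc : (∫ u in m..t, a * (1 / u)) =
                a * (Real.log t - Real.log m) := by
              rw [intervalIntegral.integral_const_mul, integral_one_div
                (by rw [Set.mem_uIcc]; push_neg; constructor <;> intro h <;> linarith),
                Real.log_div (by linarith) (by linarith)]
            have hlogt : Real.log t - Real.log m ≤
                Real.log (2 * a) + (Real.log d2 - Real.log d1) := by
              have ht0 : 0 < t := lt_of_lt_of_le hm0 hmt
              have htle : t ≤ a * d2 := hconeu t ht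
              have l1 : Real.log t ≤ Real.log a + Real.log d2 := by
                have := Real.log_le_log ht0 htle
                rwa [Real.log_mul (by linarith) (by linarith)] at this
              have l2 : Real.log d1 - Real.log 2 ≤ Real.log m := by
                have h8 : Real.log (d1 / 2) ≤ Real.log m :=
                  Real.log_le_log (by linarith) (by rw [hm]; linarith [hs.1])
                rwa [Real.log_div (by linarith) (by norm_num)] at h8
              have l3 : Real.log (2 * a) = Real.log 2 + Real.log a :=
                Real.log_mul (by norm_num) (by linarith)
              linarith
            have hmax : Real.log d2 - Real.log d1 ≤
                max 0 (Real.log d2 - Real.log d1) := le_max_right _ _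
            calc (∫ u in m..t, 1 / dB (γ u)) ≤ ∫ u in m..t, a * (1 / u) := hmono
              _ = a * (Real.log t - Real.log m) := hcalc
              _ ≤ a * (Real.log (2 * a) + max 0 (Real.log d2 - Real.log d1)) := by
                  apply mul_le_mul_of_nonneg_left (by linarith) ha0.le
              _ = a * Real.log (2 * a) + a * max 0 (Real.log d2 - Real.log d1) := by
                  ring
          linarith
      constructor
      · have hIK : I ≤ 1 + a * Real.log (2 * a) + a * qhDist z w := by
          have := mul_le_mul_of_nonneg_left hKmax ha0.le
          linarith
        have hl23 : Real.log (2 * a) ≤ Real.log (3 * a) :=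
          Real.log_le_log (by linarith) (by linarith)
        have e1 : (1:ℝ) ≤ a ^ 2 * Real.log (3 * a) := by nlinarith
        have e2 : a * Real.log (2 * a) ≤ a ^ 2 * Real.log (3 * a) := by nlinarith
        have e3 : 0 ≤ a * qhDist z w := mul_nonneg ha0.le hK0
        have e4 : 0 ≤ a ^ 2 * Real.log (3 * a) := by nlinarith
        have hI3 : I ≤ (3 * a) * ((3 * a) * Real.log (3 * a) + qhDist z w) := by
          have : (3 * a) * ((3 * a) * Real.log (3 * a) + qhDist z w) =
              9 * (a ^ 2 * Real.log (3 * a)) + 3 * (a * qhDist z w) := by ring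
          rw [this]
          linarith
        have := (inv_mul_le_iff₀ h3a).mpr hI3
        linarith
      · have h6 : I ≤ 3 * a * I := by nlinarith
        have h7 : 0 ≤ 3 * a * Real.log (3 * a) := by positivity
        linarith
  intro s hs t ht
  rcases le_total s t with h | h
  · obtain ⟨heq, hbd⟩ := key s hs t ht h
    obtain ⟨hlb, hub⟩ := hbd (γ s) (γ t) (Or.inl ⟨rfl, rfl⟩)
    have hI0 : 0 ≤ ∫ u in s..t, 1 / dB (γ u) :=
      intervalIntegral.integral_nonneg h fun u _ => one_div_nonneg.2 (dB_nonneg _)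
    have habs : |qhLen γ 0 t - qhLen γ 0 s| = ∫ u in s..t, 1 / dB (γ u) := by
      rw [heq, abs_of_nonneg hI0]
    rw [habs]
    exact ⟨hlb, hub⟩
  · obtain ⟨heq, hbd⟩ := key t ht s hs h
    obtain ⟨hlb, hub⟩ := hbd (γ s) (γ t) (Or.inr ⟨rfl, rfl⟩)
    have hI0 : 0 ≤ ∫ u in t..s, 1 / dB (γ u) :=
      intervalIntegral.integral_nonneg h fun u _ => one_div_nonneg.2 (dB_nonneg _)
    have habs : |qhLen γ 0 t - qhLen γ 0 s| = ∫ u in t..s, 1 / dB (γ u) := by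
      rw [abs_sub_comm, heq, abs_of_nonneg hI0]
    rw [habs]
    exact ⟨hlb, hub⟩
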